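/- arXiv:1309.7537 — 4 statements merged into one kernel-verified Lean document; each statement's English description precedes it below -/
import Mathlib

section
/- There are no positive integers $a_1, a_2, b$ such that $a_1 a_2 (a_1 + a_2) = b^3$. -/
/-!
Dividing by `gcd a₁ a₂` reduces to coprime `a₁, a₂`. Then `a₁`, `a₂` and `a₁ + a₂` are pairwise
coprime with product a cube, so each is a cube, and `a₁ + a₂ = r ^ 3` becomes a nontrivial
solution of `p ^ 3 + q ^ 3 = r ^ 3`, excluded by Fermat's Last Theorem for exponent 3.
-/

theorem Nat.exists_pow_of_coprime_of_mul_mul_add_eq_pow {x y c n : ℕ} (hxy : x.Coprime y)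
    (h : x * y * (x + y) = c ^ n) : ∃ p q r : ℕ, x = p ^ n ∧ y = q ^ n ∧ x + y = r ^ n := by
  have hsum : (x * y).Coprime (x + y) :=
    Nat.Coprime.mul_left (by simpa using hxy) (by simpa using hxy.symm)
  obtain ⟨d, hd⟩ := exists_eq_pow_of_mul_eq_pow (Nat.isUnit_iff.mpr hsum) h
  obtain ⟨r, hr⟩ :=
    exists_eq_pow_of_mul_eq_pow (Nat.isUnit_iff.mpr hsum.symm) ((mul_comm _ _).trans h)
  obtain ⟨p, hp⟩ := exists_eq_pow_of_mul_eq_pow (Nat.isUnit_iff.mpr hxy) hd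
  obtain ⟨q, hq⟩ :=
    exists_eq_pow_of_mul_eq_pow (Nat.isUnit_iff.mpr hxy.symm) ((mul_comm _ _).trans hd)
  exact ⟨p, q, r, hp, hq, hr⟩

theorem Nat.Coprime.mul_mul_add_ne_cube {x y : ℕ} (hxy : x.Coprime y) (hx : x ≠ 0) (hy : y ≠ 0)
    (c : ℕ) : x * y * (x + y) ≠ c ^ 3 := by
  intro h
  obtain ⟨p, q, r, rfl, rfl, hr⟩ := Nat.exists_pow_of_coprime_of_mul_mul_add_eq_pow hxy h
  have hp : p ≠ 0 := by rintro rfl; simp at hx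
  have hq : q ≠ 0 := by rintro rfl; simp at hy
  have hr0 : r ≠ 0 := by rintro rfl; simp [hp] at hr
  exact fermatLastTheoremThree p q r hp hq hr0 hr

theorem Nat.mul_mul_add_ne_cube {a b : ℕ} (ha : a ≠ 0) (hb : b ≠ 0) (c : ℕ) :
    a * b * (a + b) ≠ c ^ 3 := by
  intro h
  obtain ⟨g, x, y, hg, hxy, rfl, rfl⟩ :=
    Nat.exists_coprime' (Nat.gcd_pos_of_pos_left b (Nat.pos_of_ne_zero ha))
  have hcube : x * y * (x + y) * g ^ 3 = c ^ 3 := by rw [← h]; ring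
  obtain ⟨d, rfl⟩ : g ∣ c := (Nat.pow_dvd_pow_iff three_ne_zero).mp (Dvd.intro_left _ hcube)
  refine hxy.mul_mul_add_ne_cube (left_ne_zero_of_mul ha) (left_ne_zero_of_mul hb) d ?_
  exact Nat.eq_of_mul_eq_mul_right (pow_pos hg 3) (by rw [hcube]; ring)

theorem stmt_0 : ¬ ∃ (a₁ a₂ b : ℕ), 0 < a₁ ∧ 0 < a₂ ∧ 0 < b ∧
    a₁ * a₂ * (a₁ + a₂) = b ^ 3 := by
  rintro ⟨a₁, a₂, b, h₁, h₂, -, h⟩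
  exact Nat.mul_mul_add_ne_cube h₁.ne' h₂.ne' b h
end

section
/- The equation $u^2 + u = v^3$ has no solution in positive rational numbers $u, v$. -/
/-!
Write `u = a / b` in lowest terms. Then `u ^ 2 + u = a (a + b) / b ^ 2` is again in lowest terms,
so `u ^ 2 + u = v ^ 3` forces `b ^ 2 = (den v) ^ 3` and `a (a + b) = (num v) ^ 3`. Hence `b` is a
cube, and so are the coprime factors `a` and `a + b`; this gives a nontrivial solution of
`x ^ 3 + y ^ 3 = z ^ 3`, which Fermat's Last Theorem for exponent 3 excludes.
-/

namespace Rat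

theorem isCoprime_num_num_add_den (q : ℚ) : IsCoprime q.num (q.num + q.den) := by
  simpa [add_comm] using q.isCoprime_num_den.add_mul_left_right 1

theorem isCoprime_num_mul_num_add_den_den_sq (q : ℚ) :
    IsCoprime (q.num * (q.num + q.den)) ((q.den : ℤ) ^ 2) := by
  have hden := q.isCoprime_num_den
  exact (hden.mul_left (by simpa [add_comm] using hden.add_mul_right_left 1)).pow_right

theorem sq_add_self_eq_div (q : ℚ) :
    q ^ 2 + q = ((q.num * (q.num + q.den) : ℤ) : ℚ) / ((q.den ^ 2 : ℤ) : ℚ) := by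
  have hq : (q.den : ℚ) ≠ 0 := by exact_mod_cast q.den_ne_zero
  conv_lhs => rw [← q.num_div_den]
  push_cast
  field_simp

theorem num_sq_add_self (q : ℚ) : (q ^ 2 + q).num = q.num * (q.num + q.den) := by
  rw [sq_add_self_eq_div, num_div_eq_of_coprime (by positivity)]
  exact Int.isCoprime_iff_gcd_eq_one.mp q.isCoprime_num_mul_num_add_den_den_sq

theorem den_sq_add_self (q : ℚ) : (q ^ 2 + q).den = q.den ^ 2 := by
  have h := den_div_eq_of_coprime (by positivity)
    (Int.isCoprime_iff_gcd_eq_one.mp q.isCoprime_num_mul_num_add_den_den_sq)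
  rw [← sq_add_self_eq_div] at h
  exact_mod_cast h

theorem eq_neg_one_of_num_add_den_eq_zero {q : ℚ} (h : q.num + q.den = 0) : q = -1 := by
  have hnum : (q.num : ℚ) = -q.den := by
    rw [eq_neg_iff_add_eq_zero]
    exact_mod_cast h
  rw [← q.num_div_den, hnum, neg_div, div_self (by exact_mod_cast q.den_ne_zero)]

end Rat

theorem Nat.exists_eq_pow_three_of_sq_eq_pow_three {b d : ℕ} (h : b ^ 2 = d ^ 3) :
    ∃ e, b = e ^ 3 := by
  obtain ⟨e, rfl⟩ : d ∣ b := (Nat.pow_dvd_pow_iff two_ne_zero).mp ⟨d, by rw [h]; ring⟩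
  rcases d.eq_zero_or_pos with rfl | hd
  · exact ⟨0, by simp⟩
  have he : e ^ 2 = d := by
    apply Nat.eq_of_mul_eq_mul_left (pow_pos hd 2)
    linear_combination h
  exact ⟨e, by rw [← he]; ring⟩

theorem sq_add_self_ne_pow_three {u : ℚ} (hu : u ≠ 0) (hu' : u ≠ -1) (v : ℚ) :
    u ^ 2 + u ≠ v ^ 3 := by
  intro h
  obtain ⟨y, hy⟩ : ∃ y, u.den = y ^ 3 := Nat.exists_eq_pow_three_of_sq_eq_pow_three <| by
    rw [← Rat.den_sq_add_self, h, Rat.den_pow]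
  have hprod : u.num * (u.num + u.den) = v.num ^ 3 := by
    rw [← Rat.num_sq_add_self, h, Rat.num_pow]
  obtain ⟨⟨x, hx⟩, ⟨z, hz⟩⟩ :=
    Int.eq_pow_of_mul_eq_pow_odd u.isCoprime_num_num_add_den (by decide) hprod
  have hx0 : x ≠ 0 := by
    rintro rfl
    exact hu (Rat.num_eq_zero.mp (by simpa using hx))
  have hy0 : y ≠ 0 := by
    rintro rfl
    simp [u.den_ne_zero] at hy
  have hz0 : z ≠ 0 := by
    rintro rfl
    exact hu' (Rat.eq_neg_one_of_num_add_den_eq_zero (by simpa using hz))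
  exact fermatLastTheoremFor_iff_int.mp fermatLastTheoremThree x y z hx0
    (by exact_mod_cast hy0) hz0 (by rw [← hx, ← hz, hy]; push_cast; rfl)

theorem stmt_4 : ¬ ∃ (u v : ℚ), 0 < u ∧ 0 < v ∧ u ^ 2 + u = v ^ 3 := by
  rintro ⟨u, v, hu, -, h⟩
  exact sq_add_self_ne_pow_three hu.ne' (by linarith) v h
end

section
/- For every integer $s \geq 5$, there exist infinitely many $(s-1)$-tuples of positive integers $(a_1, \ldots, a_{s-1})$ such that $a_1 a_2 \cdots a_{s-1}(a_1 + a_2 + \cdots + a_{s-1})$ is a perfect $s$-th power. -/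
/-!
Multiplying a tuple by `c` multiplies `(∏ aᵢ) * (∑ aᵢ)` by `c ^ s`, because the product has
`s - 1` factors and the sum is homogeneous of degree one; so one solution yields infinitely many.
For a first solution take powers of two `aᵢ = 2 ^ eᵢ`: if `∑ 2 ^ eᵢ = 2 ^ m` then
`(∏ aᵢ) * (∑ aᵢ) = 2 ^ (∑ eᵢ + m)`, an `s`-th power as soon as `s ∣ ∑ eᵢ + m`. Such exponents
are assembled from runs `a, a + 1, …, a + k - 1`, whose powers of two add up to
`2 ^ (a + k) - 2 ^ a`, separately for even `s ≥ 6` and odd `s ≥ 9`. The cases `s = 5` and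
`s = 7` are covered by `(1, 2, 12, 12)` and `(2, 2, 2, 9, 9, 12)`, for which `(∏ aᵢ) * (∑ aᵢ) = 6 ^ s`.
-/

open Finset

theorem prod_mul_sum_mul_left {R ι : Type*} [CommSemiring R] [Fintype ι] (c : R) (a : ι → R) :
    (∏ i, c * a i) * ∑ i, c * a i = c ^ (Fintype.card ι + 1) * ((∏ i, a i) * ∑ i, a i) := by
  rw [prod_mul_distrib, prod_const, ← mul_sum, card_univ]
  ring

theorem infinite_setOf_prod_mul_sum_eq_pow {ι : Type*} [Fintype ι] [Nonempty ι] {s : ℕ}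
    (hs : Fintype.card ι + 1 = s) {a : ι → ℕ} (ha : ∀ i, 0 < a i) {b : ℕ}
    (hb : (∏ i, a i) * ∑ i, a i = b ^ s) :
    {a : ι → ℕ | (∀ i, 0 < a i) ∧ ∃ b : ℕ, (∏ i, a i) * (∑ i, a i) = b ^ s}.Infinite := by
  refine Set.infinite_of_injective_forall_mem (f := fun c : ℕ => fun i => (c + 1) * a i)
    (fun c c' h => ?_) (fun c => ⟨fun i => by have := ha i; positivity, (c + 1) * b, ?_⟩)
  · obtain ⟨i⟩ := ‹Nonempty ι›
    simpa using Nat.eq_of_mul_eq_mul_right (ha i) (congrFun h i)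
  · rw [prod_mul_sum_mul_left, hs, hb, mul_pow]

theorem List.prod_map_two_pow (E : List ℕ) : (E.map (2 ^ ·)).prod = 2 ^ E.sum := by
  induction E with
  | nil => rfl
  | cons e E ih => simp [ih, pow_add]

theorem List.sum_map_two_pow_range' (a k : ℕ) :
    ((List.range' a k).map (2 ^ ·)).sum + 2 ^ a = 2 ^ (a + k) := by
  induction k generalizing a with
  | zero => simp
  | succ k ih =>
    rw [List.range'_succ, List.map_cons, List.sum_cons, add_right_comm, ← two_mul,
      ← pow_succ', add_comm, ih, add_right_comm, add_assoc]

theorem List.two_mul_sum_range' (a k : ℕ) :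
    2 * (List.range' a k).sum + k = k * (2 * a + k) := by
  induction k generalizing a with
  | zero => simp
  | succ k ih =>
    rw [List.range'_succ, List.sum_cons]
    linear_combination ih (a + 1)

theorem List.prod_mul_sum_map_two_pow {E : List ℕ} {m s k : ℕ}
    (hsum : (E.map (2 ^ ·)).sum = 2 ^ m) (hexp : E.sum + m = k * s) :
    (E.map (2 ^ ·)).prod * (E.map (2 ^ ·)).sum = (2 ^ k) ^ s := by
  rw [prod_map_two_pow, hsum, ← pow_add, hexp, pow_mul]

def evenExponents (p : ℕ) : List ℕ :=
  [0, 0] ++ List.range' 1 p ++ [p + 1, p + 1, p + 1] ++ List.range' (p + 3) p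

def oddExponents (q : ℕ) : List ℕ :=
  [0, 0, 1, 2, 2, 2] ++ List.range' 4 (2 * q) ++ [2 * q + 3, 2 * q + 3]

theorem length_evenExponents (p : ℕ) : (evenExponents p).length = 2 * p + 5 := by
  simp only [evenExponents, List.length_append, List.length_range', List.length_cons,
    List.length_nil]
  ring

theorem sum_map_two_pow_evenExponents (p : ℕ) :
    ((evenExponents p).map (2 ^ ·)).sum = 2 ^ (2 * p + 3) := by
  have h₁ := List.sum_map_two_pow_range' 1 p
  have h₂ := List.sum_map_two_pow_range' (p + 3) p
  simp only [evenExponents, List.map_append, List.sum_append, List.map_cons, List.map_nil,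
    List.sum_cons, List.sum_nil] at h₁ h₂ ⊢
  ring_nf at h₁ h₂ ⊢
  linarith

theorem sum_add_evenExponents (p : ℕ) :
    (evenExponents p).sum + (2 * p + 3) = (p + 1) * (2 * p + 6) := by
  have h₁ := List.two_mul_sum_range' 1 p
  have h₂ := List.two_mul_sum_range' (p + 3) p
  simp only [evenExponents, List.sum_append, List.sum_cons, List.sum_nil]
  linarith

theorem length_oddExponents (q : ℕ) : (oddExponents q).length = 2 * q + 8 := by
  simp only [oddExponents, List.length_append, List.length_range', List.length_cons,
    List.length_nil]
  ring

theorem sum_map_two_pow_oddExponents (q : ℕ) :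
    ((oddExponents q).map (2 ^ ·)).sum = 2 ^ (2 * q + 5) := by
  have h := List.sum_map_two_pow_range' 4 (2 * q)
  simp only [oddExponents, List.map_append, List.sum_append, List.map_cons, List.map_nil,
    List.sum_cons, List.sum_nil] at h ⊢
  ring_nf at h ⊢
  linarith

theorem sum_add_oddExponents (q : ℕ) :
    (oddExponents q).sum + (2 * q + 5) = (q + 2) * (2 * q + 9) := by
  have h := List.two_mul_sum_range' 4 (2 * q)
  simp only [oddExponents, List.sum_append, List.sum_cons, List.sum_nil]
  linarith

theorem exists_list_prod_mul_sum_eq_pow {s : ℕ} (hs : 5 ≤ s) :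
    ∃ L : List ℕ, L.length + 1 = s ∧ (∀ x ∈ L, 0 < x) ∧ ∃ b, L.prod * L.sum = b ^ s := by
  have two_pow_pos (E : List ℕ) : ∀ x ∈ E.map (2 ^ ·), 0 < x := by simp
  obtain ⟨k, rfl | rfl⟩ := Nat.even_or_odd' s
  · obtain ⟨p, rfl⟩ : ∃ p, k = p + 3 := ⟨k - 3, by omega⟩
    refine ⟨(evenExponents p).map (2 ^ ·), ?_, two_pow_pos _, 2 ^ (p + 1),
      List.prod_mul_sum_map_two_pow (sum_map_two_pow_evenExponents p) ?_⟩
    · rw [List.length_map, length_evenExponents]; ring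
    · rw [sum_add_evenExponents]; ring
  · rcases k with _ | _ | _ | _ | q
    · omega
    · omega
    · exact ⟨[1, 2, 12, 12], rfl, by decide, 6, rfl⟩
    · exact ⟨[2, 2, 2, 9, 9, 12], rfl, by decide, 6, rfl⟩
    · refine ⟨(oddExponents q).map (2 ^ ·), ?_, two_pow_pos _, 2 ^ (q + 2),
        List.prod_mul_sum_map_two_pow (sum_map_two_pow_oddExponents q) ?_⟩
      · rw [List.length_map, length_oddExponents]; ring
      · rw [sum_add_oddExponents]; ring

theorem stmt_15 (s : ℕ) (hs : 5 ≤ s) :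
    {a : Fin (s - 1) → ℕ | (∀ i, 0 < a i) ∧
      ∃ b : ℕ, (∏ i, a i) * (∑ i, a i) = b ^ s}.Infinite := by
  obtain ⟨L, hlen, hpos, b, hb⟩ := exists_list_prod_mul_sum_eq_pow hs
  have hL : s - 1 = L.length := by omega
  have : Nonempty (Fin (s - 1)) := ⟨⟨0, by omega⟩⟩
  refine infinite_setOf_prod_mul_sum_eq_pow (a := fun i => L[(i.cast hL).1]) (b := b)
    (by simp only [Fintype.card_fin]; omega) (fun i => hpos _ (List.getElem_mem _)) ?_
  rw [Fin.prod_congr' (fun i => L[i.1]) hL, Fin.sum_congr' (fun i => L[i.1]) hL,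
    Fin.prod_univ_getElem, Fin.sum_univ_getElem, hb]
end

section
/- For any positive rationals $u, v, t_0$ with $4 u t_0^2 - u v^2 t_0 + 4 > 0$, the positive rationals $x = \frac{u v^3 t_0}{2(4ut_0^2 - uv^2 t_0 + 4)}$, $y = \frac{4ut_0^2 - uv^2 t_0 + 4}{2uvt_0(ut_0^2 + 1)}$, $z = \frac{(4ut_0^2 - uv^2 t_0 + 4)t_0}{2v(ut_0^2+1)}$ satisfy $xyzu(x + y + z + v) = 1$. -/
/-!
Put `D = 4ut₀² - uv²t₀ + 4` and `q = ut₀² + 1`. The product `xyzu` equals `uvt₀D / (8q²)` whatever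
`D` is; the particular value of `D` is exactly what makes `x + y + z + v` the reciprocal
`8q² / (uvt₀D)`.
-/

section Parametrization

variable {K : Type*} [Field K] {u v t₀ D : K}

theorem parametrization_mul_eq (h2 : (2 : K) ≠ 0) :
    u * v ^ 3 * t₀ / (2 * D) * (D / (2 * u * v * t₀ * (u * t₀ ^ 2 + 1))) *
      (D * t₀ / (2 * v * (u * t₀ ^ 2 + 1))) * u =
      u * v * t₀ * D / (2 ^ 3 * (u * t₀ ^ 2 + 1) ^ 2) := by
  field_simp

theorem parametrization_add_eq (h2 : (2 : K) ≠ 0) (hu : u ≠ 0) (ht : t₀ ≠ 0)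
    (hq : u * t₀ ^ 2 + 1 ≠ 0) (hD : D ≠ 0) (hD_eq : D = 4 * u * t₀ ^ 2 - u * v ^ 2 * t₀ + 4) :
    u * v ^ 3 * t₀ / (2 * D) + D / (2 * u * v * t₀ * (u * t₀ ^ 2 + 1)) +
      D * t₀ / (2 * v * (u * t₀ ^ 2 + 1)) + v =
      2 ^ 3 * (u * t₀ ^ 2 + 1) ^ 2 / (u * v * t₀ * D) := by
  field_simp
  subst hD_eq
  ring

theorem parametrization_mul_mul_add_eq_one (h2 : (2 : K) ≠ 0) (hu : u ≠ 0) (hv : v ≠ 0)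
    (ht : t₀ ≠ 0) (hq : u * t₀ ^ 2 + 1 ≠ 0) (hD : D ≠ 0)
    (hD_eq : D = 4 * u * t₀ ^ 2 - u * v ^ 2 * t₀ + 4) :
    let x := u * v ^ 3 * t₀ / (2 * D)
    let y := D / (2 * u * v * t₀ * (u * t₀ ^ 2 + 1))
    let z := D * t₀ / (2 * v * (u * t₀ ^ 2 + 1))
    x * y * z * u * (x + y + z + v) = 1 := by
  intro x y z
  rw [parametrization_mul_eq h2, parametrization_add_eq h2 hu ht hq hD hD_eq]
  field_simp

end Parametrization

theorem stmt_19 (u v t₀ : ℚ) (hu : 0 < u) (hv : 0 < v) (ht : 0 < t₀)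
    (h : 0 < 4 * u * t₀ ^ 2 - u * v ^ 2 * t₀ + 4) :
    let x := u * v ^ 3 * t₀ / (2 * (4 * u * t₀ ^ 2 - u * v ^ 2 * t₀ + 4))
    let y := (4 * u * t₀ ^ 2 - u * v ^ 2 * t₀ + 4) / (2 * u * v * t₀ * (u * t₀ ^ 2 + 1))
    let z := (4 * u * t₀ ^ 2 - u * v ^ 2 * t₀ + 4) * t₀ / (2 * v * (u * t₀ ^ 2 + 1))
    0 < x ∧ 0 < y ∧ 0 < z ∧ x * y * z * u * (x + y + z + v) = 1 :=
  ⟨by positivity, by positivity, by positivity,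
    parametrization_mul_mul_add_eq_one two_ne_zero hu.ne' hv.ne' ht.ne' (by positivity) h.ne' rfl⟩
end
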